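/- Suppose for each device k and each step t, E‖∇L_k(w_t^k, ξ_t^k)‖² ≤ G², the stepsizes η_t are non-increasing with η_t ≤ 2η_{t+E}, and each device takes at most E - 1 local SGD steps since the last synchronization step t_0 (where w_{t_0}^k = w̄_{t_0} is common to all devices). Let w̄_t = ∑_k p_k w_t^k with weights p_k ≥ 0 summing to 1. Then E[∑_k p_k ‖w̄_t - w_t^k‖²] ≤ 4 η_t² (E - 1)² G². -/

import Mathlib

/-!
Since all devices start the round from the common point `w̄_{t₀}`, the weighted spread
`∑ₖ pₖ ‖w̄_t - w_t^k‖²` is a variance, hence at most the second moment `∑ₖ pₖ ‖w_t^k - w̄_{t₀}‖²`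
about that point. Each `w_t^k - w_{t₀}^k` is a sum of `n = t - t₀ ≤ E - 1` SGD steps, so by the
Cauchy–Schwarz inequality its squared norm is at most `n ∑ₛ ηₛ² ‖gₛ^k‖²`. Finally `ηₛ ≤ η_{t₀} ≤
2η_{t₀+E} ≤ 2η_t` for `t₀ ≤ s < t`, where `ηₛ ≥ 0` is forced by `ηₛ ≤ 2η_{s+E} ≤ 2ηₛ`, and
taking expectations gives `n² (2η_t)² G²`.
-/

open MeasureTheory Finset

theorem norm_sum_sq_le_card_mul_sum_norm_sq {V ι : Type*} [SeminormedAddCommGroup V]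
    (s : Finset ι) (f : ι → V) :
    ‖∑ i ∈ s, f i‖ ^ 2 ≤ #s * ∑ i ∈ s, ‖f i‖ ^ 2 :=
  (pow_le_pow_left₀ (norm_nonneg _) (norm_sum_le _ _) 2).trans sq_sum_le_card_mul_sum_sq

section WeightedMean

variable {V ι : Type*} [NormedAddCommGroup V] [InnerProductSpace ℝ V] [Fintype ι]
  {p : ι → ℝ}

theorem sum_mul_norm_sub_weightedMean_sq_le_sum_mul_norm_sq (hpsum : ∑ k, p k = 1)
    (v : ι → V) :
    ∑ k, p k * ‖(∑ j, p j • v j) - v k‖ ^ 2 ≤ ∑ k, p k * ‖v k‖ ^ 2 := by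
  set m : V := ∑ j, p j • v j
  have hinner : ∑ k, p k * inner ℝ m (v k) = ‖m‖ ^ 2 := by
    rw [← real_inner_self_eq_norm_sq, inner_sum]
    simp_rw [real_inner_smul_right]
  have hexpand : ∑ k, p k * ‖m - v k‖ ^ 2 = ∑ k, p k * ‖v k‖ ^ 2 - ‖m‖ ^ 2 := by
    simp_rw [norm_sub_sq_real, mul_add, mul_sub, sum_add_distrib, sum_sub_distrib,
      ← sum_mul, hpsum, mul_left_comm _ (2 : ℝ), ← mul_sum, hinner]
    ring
  rw [hexpand]
  linarith [sq_nonneg ‖m‖]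

theorem sum_mul_norm_sub_weightedMean_sq_le (hpsum : ∑ k, p k = 1) (v : ι → V) (c : V) :
    ∑ k, p k * ‖(∑ j, p j • v j) - v k‖ ^ 2 ≤ ∑ k, p k * ‖v k - c‖ ^ 2 := by
  have hshift : ∑ j, p j • (v j - c) = (∑ j, p j • v j) - c := by
    simp_rw [smul_sub, sum_sub_distrib, ← sum_smul, hpsum, one_smul]
  have := sum_mul_norm_sub_weightedMean_sq_le_sum_mul_norm_sq hpsum (fun k => v k - c)
  simpa only [hshift, sub_sub_sub_cancel_right] using this

theorem sum_mul_norm_sub_weightedMean_sq_le_of_forall_eq (hpsum : ∑ k, p k = 1) (v u : ι → V)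
    (hu : ∀ j k, u j = u k) :
    ∑ k, p k * ‖(∑ j, p j • v j) - v k‖ ^ 2 ≤ ∑ k, p k * ‖v k - u k‖ ^ 2 := by
  have hmean : ∀ k, ∑ j, p j • u j = u k := fun k => by
    simp_rw [hu _ k, ← sum_smul, hpsum, one_smul]
  exact (sum_mul_norm_sub_weightedMean_sq_le hpsum v (∑ j, p j • u j)).trans_eq
    (sum_congr rfl fun k _ => by rw [hmean k])

end WeightedMean

theorem sub_eq_sum_Ico_of_forall_eq_sub {V : Type*} [AddCommGroup V] {x a : ℕ → V}
    {t₀ t : ℕ} (ht : t₀ ≤ t) (hstep : ∀ s, t₀ ≤ s → s < t → x (s + 1) = x s - a s) :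
    x t₀ - x t = ∑ s ∈ Ico t₀ t, a s := by
  induction t, ht using Nat.le_induction with
  | base => simp
  | succ u hu ih =>
    rw [hstep u hu u.lt_succ_self, sum_Ico_succ_top hu,
      ← ih fun s hs hsu => hstep s hs (hsu.trans u.lt_succ_self)]
    abel

theorem norm_sub_sq_le_of_forall_eq_sub_smul {V : Type*} [SeminormedAddCommGroup V]
    [NormedSpace ℝ V] {x g : ℕ → V} {η : ℕ → ℝ} {t₀ t : ℕ} (ht : t₀ ≤ t)
    (hstep : ∀ s, t₀ ≤ s → s < t → x (s + 1) = x s - η s • g s) :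
    ‖x t - x t₀‖ ^ 2 ≤ (t - t₀ : ℕ) * ∑ s ∈ Ico t₀ t, η s ^ 2 * ‖g s‖ ^ 2 := by
  rw [norm_sub_rev, sub_eq_sum_Ico_of_forall_eq_sub ht hstep, ← Nat.card_Ico]
  simpa only [norm_smul, mul_pow, Real.norm_eq_abs, sq_abs]
    using norm_sum_sq_le_card_mul_sum_norm_sq (Ico t₀ t) (fun s => η s • g s)

section StepSize

variable {η : ℕ → ℝ} {E : ℕ}

theorem Antitone.nonneg_of_le_two_mul (hanti : Antitone η) (hηE : ∀ s, η s ≤ 2 * η (s + E))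
    (s : ℕ) : 0 ≤ η s := by
  linarith [hηE s, hanti (s.le_add_right E)]

theorem Antitone.sq_le_sq_two_mul (hanti : Antitone η) (hηE : ∀ s, η s ≤ 2 * η (s + E))
    {t₀ s t : ℕ} (hs : t₀ ≤ s) (ht : t < t₀ + E) : η s ^ 2 ≤ (2 * η t) ^ 2 := by
  have hle : η s ≤ 2 * η t := calc
    η s ≤ η t₀ := hanti hs
    _ ≤ 2 * η (t₀ + E) := hηE t₀
    _ ≤ 2 * η t := by linarith [hanti ht.le]
  exact pow_le_pow_left₀ (hanti.nonneg_of_le_two_mul hηE s) hle 2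

end StepSize

section Expectation

variable {Ω : Type*} [MeasurableSpace Ω] {μ : Measure Ω}

theorem integral_sum_mul_le_card_mul {α : Type*} {s : Finset α} {c : α → ℝ} {X : α → Ω → ℝ}
    {b M : ℝ} (hc₀ : ∀ i ∈ s, 0 ≤ c i) (hc : ∀ i ∈ s, c i ≤ b) (hX₀ : ∀ i ω, 0 ≤ X i ω)
    (hX : ∀ i, Integrable (X i) μ) (hXM : ∀ i, ∫ ω, X i ω ∂μ ≤ M) :
    ∫ ω, ∑ i ∈ s, c i * X i ω ∂μ ≤ #s * (b * M) := by
  rw [integral_finsetSum _ fun i _ => (hX i).const_mul _, ← nsmul_eq_mul]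
  refine sum_le_card_nsmul _ _ _ fun i hi => ?_
  rw [integral_const_mul]
  exact mul_le_mul (hc i hi) (hXM i) (integral_nonneg (hX₀ i)) ((hc₀ i hi).trans (hc i hi))

theorem integral_le_of_le_sum_mul {ι : Type*} [Fintype ι] {p : ι → ℝ} {F : Ω → ℝ}
    {D : ι → Ω → ℝ} {C : ℝ} (hp : ∀ k, 0 ≤ p k) (hpsum : ∑ k, p k = 1) (hF₀ : ∀ ω, 0 ≤ F ω)
    (hFD : ∀ ω, F ω ≤ ∑ k, p k * D k ω) (hD : ∀ k, Integrable (D k) μ)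
    (hDC : ∀ k, ∫ ω, D k ω ∂μ ≤ C) : ∫ ω, F ω ∂μ ≤ C := calc
  ∫ ω, F ω ∂μ ≤ ∫ ω, ∑ k, p k * D k ω ∂μ :=
    integral_mono_of_nonneg (.of_forall hF₀)
      (integrable_finsetSum _ fun k _ => (hD k).const_mul _) (.of_forall hFD)
  _ = ∑ k, p k * ∫ ω, D k ω ∂μ := by
    rw [integral_finsetSum _ fun k _ => (hD k).const_mul _]
    simp_rw [integral_const_mul]
  _ ≤ ∑ k, p k * C := by gcongr with k; exacts [hp k, hDC k]
  _ = C := by rw [← sum_mul, hpsum, one_mul]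

end Expectation

theorem cast_sq_le_sq_cast_sub_one {n E : ℕ} (h : n ≤ E - 1) :
    (n : ℝ) ^ 2 ≤ ((E : ℝ) - 1) ^ 2 := by
  rcases E with _ | E
  · simp_all
  · simpa using pow_le_pow_left₀ n.cast_nonneg (Nat.cast_le.mpr h) 2

theorem stmt_5_general {d N : ℕ} {Ω : Type*} [MeasureSpace Ω]
    (E : ℕ)
    (t0 t : ℕ) (ht0 : t0 ≤ t) (hsteps : t - t0 ≤ E - 1)
    (w g : ℕ → Fin N → Ω → EuclideanSpace ℝ (Fin d))
    (η : ℕ → ℝ) (G : ℝ)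
    (p : Fin N → ℝ) (hp : ∀ k, 0 ≤ p k) (hpsum : ∑ k, p k = 1)
    (hηmono : ∀ s, η (s + 1) ≤ η s)
    (hηE : ∀ s, η s ≤ 2 * η (s + E))
    (hupdate : ∀ s, t0 ≤ s → s < t → ∀ k ω,
      w (s + 1) k ω = w s k ω - η s • g s k ω)
    (hinit : ∀ k k', w t0 k = w t0 k')
    (hgrad : ∀ s k, ∫ ω, ‖g s k ω‖ ^ 2 ≤ G ^ 2)
    (hint : ∀ s k, Integrable (fun ω => ‖g s k ω‖ ^ 2)) :
    ∫ ω, ∑ k, p k * ‖(∑ k', p k' • w t k' ω) - w t k ω‖ ^ 2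
      ≤ 4 * (η t) ^ 2 * ((E : ℝ) - 1) ^ 2 * G ^ 2 := by
  have hanti : Antitone η := antitone_nat_of_succ_le hηmono
  set n : ℕ := t - t0
  set D : Fin N → Ω → ℝ := fun k ω => n * ∑ s ∈ Ico t0 t, η s ^ 2 * ‖g s k ω‖ ^ 2
  have hspread : ∀ ω, ∑ k, p k * ‖(∑ k', p k' • w t k' ω) - w t k ω‖ ^ 2 ≤ ∑ k, p k * D k ω :=
    fun ω => calc
      _ ≤ ∑ k, p k * ‖w t k ω - w t0 k ω‖ ^ 2 :=
        sum_mul_norm_sub_weightedMean_sq_le_of_forall_eq hpsum _ _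
          fun j k => congrFun (hinit j k) ω
      _ ≤ ∑ k, p k * D k ω := by
        gcongr with k
        · exact hp k
        · exact norm_sub_sq_le_of_forall_eq_sub_smul (x := (w · k ω)) (g := (g · k ω)) ht0
            fun s hs hst => hupdate s hs hst k ω
  have hD : ∀ k, ∫ ω, D k ω ≤ n * (n * ((2 * η t) ^ 2 * G ^ 2)) := fun k => by
    rw [integral_const_mul]
    gcongr
    simpa only [Nat.card_Ico] using integral_sum_mul_le_card_mul (fun s _ => sq_nonneg (η s))
      (fun s hs => hanti.sq_le_sq_two_mul hηE (mem_Ico.mp hs).1 (by grind))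
      (fun s ω => sq_nonneg ‖g s k ω‖) (hint · k) (hgrad · k)
  calc _ ≤ n * (n * ((2 * η t) ^ 2 * G ^ 2)) :=
        integral_le_of_le_sum_mul hp hpsum
          (fun ω => sum_nonneg fun k _ => mul_nonneg (hp k) (sq_nonneg _)) hspread
          (fun k => (integrable_finsetSum _ fun s _ => (hint s k).const_mul _).const_mul _) hD
    _ = (n : ℝ) ^ 2 * (4 * η t ^ 2 * G ^ 2) := by ring
    _ ≤ ((E : ℝ) - 1) ^ 2 * (4 * η t ^ 2 * G ^ 2) :=
        mul_le_mul_of_nonneg_right (cast_sq_le_sq_cast_sub_one hsteps) (by positivity)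
    _ = _ := by ring

/-- FedAvg divergence bound: within at most `E - 1` local SGD steps since the last
synchronization, the weighted divergence of local models from their average is bounded
by `4 η_t² (E-1)² G²`. -/
theorem stmt_5 {d N : ℕ} {Ω : Type*} [MeasureSpace Ω]
    [IsProbabilityMeasure (volume : Measure Ω)]
    (E : ℕ) (hE : 1 ≤ E)
    (t0 t : ℕ) (ht0 : t0 ≤ t) (hsteps : t - t0 ≤ E - 1)
    (w g : ℕ → Fin N → Ω → EuclideanSpace ℝ (Fin d))
    (η : ℕ → ℝ) (G : ℝ) (hG : 0 ≤ G)
    (p : Fin N → ℝ) (hp : ∀ k, 0 ≤ p k) (hpsum : ∑ k, p k = 1)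
    (hηpos : ∀ s, 0 ≤ η s)
    (hηmono : ∀ s, η (s + 1) ≤ η s)
    (hηE : ∀ s, η s ≤ 2 * η (s + E))
    (hupdate : ∀ s, t0 ≤ s → s < t → ∀ k ω,
      w (s + 1) k ω = w s k ω - η s • g s k ω)
    (hinit : ∀ k k', w t0 k = w t0 k')
    (hgrad : ∀ s k, ∫ ω, ‖g s k ω‖ ^ 2 ≤ G ^ 2)
    (hint : ∀ s k, Integrable (fun ω => ‖g s k ω‖ ^ 2)) :
    ∫ ω, ∑ k, p k * ‖(∑ k', p k' • w t k' ω) - w t k ω‖ ^ 2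
      ≤ 4 * (η t) ^ 2 * ((E : ℝ) - 1) ^ 2 * G ^ 2 :=
  stmt_5_general E t0 t ht0 hsteps w g η G p hp hpsum hηmono hηE hupdate hinit hgrad hint
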